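/- arXiv:1905.02466 — 2 statements merged into one kernel-verified Lean document; each statement's English description precedes it below -/
import Mathlib

section
/- Let (X, ρ) be a nonempty compact metric space. Then the diameter of the set of idempotent probability measures on X with respect to ρ_I equals the diameter of (X, ρ): sup{ρ_I(μ₁, μ₂) : μ₁, μ₂ idempotent probability measures on X} = sup{ρ(x, y) : x, y ∈ X}. -/
noncomputable section

/-- An idempotent probability measure on a topological space `X`:
a functional `μ : C(X, ℝ) → ℝ` which sends constants to their values,
is `max`-`plus` homogeneous, and turns pointwise maxima into maxima. -/
def IsIPM {X : Type*} [TopologicalSpace X] (μ : C(X, ℝ) → ℝ) : Prop :=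
  (∀ c : ℝ, μ (ContinuousMap.const X c) = c) ∧
  (∀ (c : ℝ) (φ : C(X, ℝ)), μ (ContinuousMap.const X c + φ) = c + μ φ) ∧
  (∀ φ ψ : C(X, ℝ), μ (φ ⊔ ψ) = max (μ φ) (μ ψ))

/-- `ξ` is a `(μ₁, μ₂)`-admissible idempotent probability measure on `X × X`. -/
def IsAdmissible {X : Type*} [TopologicalSpace X]
    (μ₁ μ₂ : C(X, ℝ) → ℝ) (ξ : C(X × X, ℝ) → ℝ) : Prop :=
  IsIPM ξ ∧
  (∀ φ : C(X, ℝ), ξ (φ.comp ⟨Prod.fst, continuous_fst⟩) = μ₁ φ) ∧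
  (∀ φ : C(X, ℝ), ξ (φ.comp ⟨Prod.snd, continuous_snd⟩) = μ₂ φ)

/-- The density of an idempotent probability measure. -/
def idemDensity {Z : Type*} [TopologicalSpace Z] (μ : C(Z, ℝ) → ℝ) (z : Z) : EReal :=
  sInf {r : EReal | ∃ φ : C(Z, ℝ), φ ≤ 0 ∧ φ z = 0 ∧ r = (μ φ : EReal)}

/-- The support of an idempotent probability measure. -/
def idemSupp {Z : Type*} [TopologicalSpace Z] (μ : C(Z, ℝ) → ℝ) : Set Z :=
  {z | ⊥ < idemDensity μ z}

/-- The metric `ρ` of a metric space `X`, as a continuous function on `X × X`. -/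
def rhoFun (X : Type*) [MetricSpace X] : C(X × X, ℝ) :=
  ⟨fun p => dist p.1 p.2, continuous_dist⟩

/-- The Uspenskii-type distance function `d_I` on idempotent probability measures. -/
def dI {X : Type*} [MetricSpace X] (μ₁ μ₂ : C(X, ℝ) → ℝ) : ℝ :=
  sInf {r : ℝ | ∃ ξ : C(X × X, ℝ) → ℝ, IsAdmissible μ₁ μ₂ ξ ∧ r = ξ (rhoFun X)}

/-- The distance function `ρ_I` on idempotent probability measures. -/
def rhoI {X : Type*} [MetricSpace X] (μ₁ μ₂ : C(X, ℝ) → ℝ) : ℝ :=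
  sInf {r : ℝ | ∃ ξ : C(X × X, ℝ) → ℝ, IsAdmissible μ₁ μ₂ ξ ∧
    r = sSup {s : ℝ | ∃ p ∈ idemSupp ξ, s = max (ξ (rhoFun X)) (dist p.1 p.2)}}

-- auxiliary
theorem IsIPM.mono {X : Type*} [TopologicalSpace X] {μ : C(X,ℝ) → ℝ} (h : IsIPM μ)
    {φ ψ : C(X,ℝ)} (hle : φ ≤ ψ) : μ φ ≤ μ ψ := by
  have h2 := h.2.2 φ ψ
  rw [sup_eq_right.mpr hle] at h2
  rw [h2]; exact le_max_left _ _

def dirac {X : Type*} [TopologicalSpace X] (x : X) : C(X,ℝ) → ℝ := fun φ => φ x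

theorem dirac_ipm {X : Type*} [TopologicalSpace X] (x : X) : IsIPM (dirac x) :=
  ⟨fun _ => rfl, fun _ _ => rfl, fun _ _ => rfl⟩

theorem diracP_adm {X : Type*} [TopologicalSpace X] (x y : X) :
    IsAdmissible (dirac x) (dirac y) (dirac (X := X × X) (x, y)) :=
  ⟨dirac_ipm _, fun _ => rfl, fun _ => rfl⟩

/-- bump function -/
def bump {X : Type*} [MetricSpace X] (z1 x : X) (c : ℝ) : C(X, ℝ) :=
  ⟨fun w => -c * min 1 (dist w z1 / dist x z1),
   (continuous_const.mul ((continuous_const.min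
      ((continuous_id.dist continuous_const).div_const _))))⟩

theorem bump_nonpos {X : Type*} [MetricSpace X] (z1 x : X) {c : ℝ} (hc : 0 ≤ c) :
    bump z1 x c ≤ 0 := by
  rw [ContinuousMap.le_def]
  intro w
  have h1 : 0 ≤ min 1 (dist w z1 / dist x z1) :=
    le_min one_pos.le (div_nonneg dist_nonneg dist_nonneg)
  simp only [bump, ContinuousMap.coe_mk, ContinuousMap.zero_apply]
  nlinarith

theorem bump_self {X : Type*} [MetricSpace X] (z1 x : X) (c : ℝ) : bump z1 x c z1 = 0 := by
  simp [bump]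

theorem bump_x {X : Type*} [MetricSpace X] {z1 x : X} (h : x ≠ z1) (c : ℝ) :
    bump z1 x c x = -c := by
  have : dist x z1 ≠ 0 := fun h0 => h (by rwa [dist_eq_zero] at h0)
  simp [bump, div_self this]

theorem density_bot_of_ne {X : Type*} [MetricSpace X] {x y : X} {ξ : C(X × X, ℝ) → ℝ}
    (hξ : IsAdmissible (dirac x) (dirac y) ξ) {z : X × X} (hz : z ≠ (x, y)) :
    idemDensity ξ z = ⊥ := by
  rw [idemDensity, sInf_eq_bot]
  intro b hb
  obtain ⟨M, _, hMb⟩ := EReal.lt_iff_exists_real_btwn.mp hb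
  set c : ℝ := |M| + 1 with hc
  have hc0 : (0:ℝ) ≤ c := by positivity
  have hvc : -c < M := by have := neg_abs_le M; simp only [hc]; linarith
  have hcase : z.1 ≠ x ∨ z.2 ≠ y := by
    by_contra hcon
    push_neg at hcon
    exact hz (Prod.ext hcon.1 hcon.2)
  have key : ∃ φ : C(X × X, ℝ), φ ≤ 0 ∧ φ z = 0 ∧ ξ φ = -c := by
    rcases hcase with h1 | h2
    · refine ⟨(bump z.1 x c).comp ⟨Prod.fst, continuous_fst⟩, ?_, ?_, ?_⟩
      · rw [ContinuousMap.le_def]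
        intro p
        simpa using ContinuousMap.le_def.mp (bump_nonpos z.1 x hc0) p.1
      · simpa using bump_self z.1 x c
      · rw [hξ.2.1 (bump z.1 x c)]
        exact bump_x (Ne.symm h1) c
    · refine ⟨(bump z.2 y c).comp ⟨Prod.snd, continuous_snd⟩, ?_, ?_, ?_⟩
      · rw [ContinuousMap.le_def]
        intro p
        simpa using ContinuousMap.le_def.mp (bump_nonpos z.2 y hc0) p.2
      · simpa using bump_self z.2 y c
      · rw [hξ.2.2 (bump z.2 y c)]
        exact bump_x (Ne.symm h2) c
  obtain ⟨φ, hφ0, hφz, hφξ⟩ := key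
  refine ⟨((ξ φ : ℝ) : EReal), ⟨φ, hφ0, hφz, rfl⟩, ?_⟩
  calc ((ξ φ : ℝ) : EReal) = ((-c : ℝ) : EReal) := by rw [hφξ]
  _ < ((M : ℝ) : EReal) := by exact_mod_cast hvc
  _ < b := hMb

theorem density_xy_ne_bot {X : Type*} [MetricSpace X] [CompactSpace X] [Nonempty X]
    {x y : X} {ξ : C(X × X, ℝ) → ℝ}
    (hξ : IsAdmissible (dirac x) (dirac y) ξ) :
    idemDensity ξ (x, y) ≠ ⊥ := by
  intro hbot
  have key : ∀ z : X × X, ∃ φ : C(X × X, ℝ), φ ≤ 0 ∧ φ z = 0 ∧ ξ φ ≤ -2 := by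
    intro z
    by_cases hz : z = (x, y)
    · subst hz
      by_contra hcon
      push_neg at hcon
      have hge : ((-2:ℝ) : EReal) ≤ idemDensity ξ (x, y) := by
        apply le_sInf
        rintro r ⟨φ, hφ0, hφz, rfl⟩
        exact_mod_cast (hcon φ hφ0 hφz).le
      rw [hbot] at hge
      exact absurd hge (by simp)
    · have hcase : z.1 ≠ x ∨ z.2 ≠ y := by
        by_contra hcon
        push_neg at hcon
        exact hz (Prod.ext hcon.1 hcon.2)
      rcases hcase with h1 | h2
      · refine ⟨(bump z.1 x 2).comp ⟨Prod.fst, continuous_fst⟩, ?_, ?_, ?_⟩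
        · rw [ContinuousMap.le_def]
          intro p
          simpa using ContinuousMap.le_def.mp (bump_nonpos z.1 x (by norm_num)) p.1
        · simpa using bump_self z.1 x 2
        · rw [hξ.2.1 (bump z.1 x 2)]
          exact le_of_eq (bump_x (Ne.symm h1) 2)
      · refine ⟨(bump z.2 y 2).comp ⟨Prod.snd, continuous_snd⟩, ?_, ?_, ?_⟩
        · rw [ContinuousMap.le_def]
          intro p
          simpa using ContinuousMap.le_def.mp (bump_nonpos z.2 y (by norm_num)) p.2
        · simpa using bump_self z.2 y 2
        · rw [hξ.2.2 (bump z.2 y 2)]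
          exact le_of_eq (bump_x (Ne.symm h2) 2)
  choose φ hφ0 hφz hφξ using key
  have hUopen : ∀ z : X × X, IsOpen {p | -1 < φ z p} :=
    fun z => isOpen_lt continuous_const (φ z).continuous
  obtain ⟨t, ht⟩ := isCompact_univ.elim_finite_subcover (fun z => {p | -1 < φ z p})
    hUopen (fun p _ => Set.mem_iUnion.mpr ⟨p, by simp [hφz p]⟩)
  have htne : t.Nonempty := by
    obtain ⟨p⟩ := ‹Nonempty X›
    have hm := ht (Set.mem_univ ((p, p)))
    rw [Set.mem_iUnion₂] at hm
    obtain ⟨z, hzt, _⟩ := hm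
    exact ⟨z, hzt⟩
  set Φ := t.sup' htne φ with hΦ
  have hξΦ : ξ Φ = t.sup' htne fun z => ξ (φ z) := by
    let F : SupHom C(X × X, ℝ) ℝ := ⟨ξ, fun a b => hξ.1.2.2 a b⟩
    exact map_finset_sup' F htne φ
  have h1 : ξ Φ ≤ -2 := by
    rw [hξΦ]; exact Finset.sup'_le _ _ fun z _ => hφξ z
  have h2 : (-1:ℝ) ≤ ξ Φ := by
    have hle : ContinuousMap.const (X × X) (-1) ≤ Φ := by
      rw [ContinuousMap.le_def]
      intro p
      have hm := ht (Set.mem_univ p)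
      rw [Set.mem_iUnion₂] at hm
      obtain ⟨z, hzt, hpz⟩ := hm
      simp only [ContinuousMap.const_apply]
      calc (-1:ℝ) ≤ φ z p := le_of_lt hpz
      _ ≤ Φ p := by
          rw [hΦ, ContinuousMap.sup'_apply]
          exact Finset.le_sup' (fun w => φ w p) hzt
    calc (-1:ℝ) = ξ (ContinuousMap.const _ (-1)) := (hξ.1.1 _).symm
    _ ≤ ξ Φ := hξ.1.mono hle
  linarith

theorem supp_eq_dirac {X : Type*} [MetricSpace X] [CompactSpace X] [Nonempty X]
    {x y : X} {ξ : C(X × X, ℝ) → ℝ}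
    (hξ : IsAdmissible (dirac x) (dirac y) ξ) :
    idemSupp ξ = {(x, y)} := by
  ext z
  simp only [idemSupp, Set.mem_setOf_eq, Set.mem_singleton_iff]
  constructor
  · intro h
    by_contra hz
    rw [density_bot_of_ne hξ hz] at h
    exact lt_irrefl _ h
  · rintro rfl
    exact bot_lt_iff_ne_bot.mpr (density_xy_ne_bot hξ)


theorem stmt13 {X : Type*} [MetricSpace X] [CompactSpace X] [Nonempty X] :
    sSup {r : ℝ | ∃ μ₁ μ₂ : C(X, ℝ) → ℝ, IsIPM μ₁ ∧ IsIPM μ₂ ∧ r = rhoI μ₁ μ₂} =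
      sSup {r : ℝ | ∃ x y : X, r = dist x y} := by
  set D := sSup {r : ℝ | ∃ x y : X, r = dist x y} with hD
  have hset : {r : ℝ | ∃ x y : X, r = dist x y} = Set.range (fun p : X × X => dist p.1 p.2) := by
    ext r
    constructor
    · rintro ⟨x, y, rfl⟩; exact ⟨(x, y), rfl⟩
    · rintro ⟨p, rfl⟩; exact ⟨p.1, p.2, rfl⟩
  have hbdd : BddAbove {r : ℝ | ∃ x y : X, r = dist x y} := by
    rw [hset]
    exact (isCompact_range continuous_dist).bddAbove
  have hDub : ∀ x y : X, dist x y ≤ D := fun x y => le_csSup hbdd ⟨x, y, rfl⟩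
  obtain ⟨x0⟩ := ‹Nonempty X›
  have hD0 : 0 ≤ D := by simpa using hDub x0 x0
  have hrho : ∀ ξ : C(X × X, ℝ) → ℝ, IsIPM ξ → ξ (rhoFun X) ≤ D := by
    intro ξ hξ
    have hle : rhoFun X ≤ ContinuousMap.const (X × X) D := by
      rw [ContinuousMap.le_def]
      intro p
      simpa [rhoFun] using hDub p.1 p.2
    calc ξ (rhoFun X) ≤ ξ (ContinuousMap.const _ D) := hξ.mono hle
    _ = D := hξ.1 D
  have hval : ∀ ξ : C(X × X, ℝ) → ℝ, IsIPM ξ →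
      0 ≤ sSup {s : ℝ | ∃ p ∈ idemSupp ξ, s = max (ξ (rhoFun X)) (dist p.1 p.2)} ∧
      sSup {s : ℝ | ∃ p ∈ idemSupp ξ, s = max (ξ (rhoFun X)) (dist p.1 p.2)} ≤ D := by
    intro ξ hξ
    set T := {s : ℝ | ∃ p ∈ idemSupp ξ, s = max (ξ (rhoFun X)) (dist p.1 p.2)} with hT
    have hTub : ∀ s ∈ T, s ≤ D := by
      rintro s ⟨p, _, rfl⟩
      exact max_le (hrho ξ hξ) (hDub p.1 p.2)
    refine ⟨?_, Real.sSup_le hTub hD0⟩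
    rcases Set.eq_empty_or_nonempty T with h | hne
    · rw [h, Real.sSup_empty]
    · obtain ⟨s, hs⟩ := hne
      have hs0 : 0 ≤ s := by
        obtain ⟨p, _, rfl⟩ := hs
        exact le_max_of_le_right dist_nonneg
      exact le_trans hs0 (le_csSup ⟨D, hTub⟩ hs)
  have hrhoI : ∀ μ₁ μ₂ : C(X, ℝ) → ℝ, IsIPM μ₁ → IsIPM μ₂ →
      0 ≤ rhoI μ₁ μ₂ ∧ rhoI μ₁ μ₂ ≤ D := by
    intro μ₁ μ₂ h₁ h₂
    rw [rhoI]
    set S := {r : ℝ | ∃ ξ : C(X × X, ℝ) → ℝ, IsAdmissible μ₁ μ₂ ξ ∧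
      r = sSup {s : ℝ | ∃ p ∈ idemSupp ξ, s = max (ξ (rhoFun X)) (dist p.1 p.2)}} with hS
    have hsub : ∀ r ∈ S, 0 ≤ r ∧ r ≤ D := by
      rintro r ⟨ξ, hadm, rfl⟩
      exact hval ξ hadm.1
    rcases Set.eq_empty_or_nonempty S with h | hne
    · rw [h, Real.sInf_empty]
      exact ⟨le_refl 0, hD0⟩
    · obtain ⟨r, hr⟩ := hne
      constructor
      · exact le_csInf ⟨r, hr⟩ fun s hs => (hsub s hs).1
      · exact le_trans (csInf_le ⟨0, fun s hs => (hsub s hs).1⟩ hr) (hsub r hr).2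
  have hlow : ∀ x y : X, dist x y ≤ rhoI (dirac x) (dirac y) := by
    intro x y
    rw [rhoI]
    apply le_csInf
    · exact ⟨_, ⟨dirac (x, y), diracP_adm x y, rfl⟩⟩
    · rintro r ⟨ξ, hadm, rfl⟩
      rw [supp_eq_dirac hadm]
      have heq : {s : ℝ | ∃ p ∈ ({(x, y)} : Set (X × X)), s = max (ξ (rhoFun X)) (dist p.1 p.2)}
          = {max (ξ (rhoFun X)) (dist x y)} := by
        ext s
        simp
      rw [heq, csSup_singleton]
      exact le_max_right _ _
  apply le_antisymm
  · apply Real.sSup_le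
    · rintro r ⟨μ₁, μ₂, h₁, h₂, rfl⟩
      exact (hrhoI μ₁ μ₂ h₁ h₂).2
    · exact hD0
  · have hLbdd : BddAbove {r : ℝ | ∃ μ₁ μ₂ : C(X, ℝ) → ℝ, IsIPM μ₁ ∧ IsIPM μ₂ ∧ r = rhoI μ₁ μ₂} := by
      refine ⟨D, ?_⟩
      rintro r ⟨μ₁, μ₂, h₁, h₂, rfl⟩
      exact (hrhoI μ₁ μ₂ h₁ h₂).2
    have hub : ∀ x y : X, dist x y ≤
        sSup {r : ℝ | ∃ μ₁ μ₂ : C(X, ℝ) → ℝ, IsIPM μ₁ ∧ IsIPM μ₂ ∧ r = rhoI μ₁ μ₂} :=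
      fun x y => le_trans (hlow x y)
        (le_csSup hLbdd ⟨dirac x, dirac y, dirac_ipm x, dirac_ipm y, rfl⟩)
    have h0 : 0 ≤ sSup {r : ℝ | ∃ μ₁ μ₂ : C(X, ℝ) → ℝ, IsIPM μ₁ ∧ IsIPM μ₂ ∧ r = rhoI μ₁ μ₂} := by
      simpa using hub x0 x0
    refine Real.sSup_le ?_ h0
    rintro r ⟨x, y, rfl⟩
    exact hub x y
end
end

section
/- Let X be a compact Hausdorff space and μ₁, μ₂ idempotent probability measures on X whose supports supp μ₁ and supp μ₂ each contain at least two points. Then the set Λ(μ₁, μ₂) of (μ₁, μ₂)-admissible idempotent probability measures on X × X has cardinality at least that of the continuum. -/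
noncomputable section

/-!
By compactness, `μ₁` and `μ₂` dominate Dirac measures `δ_{x₀}` and `δ_b` (points of density `0`).
Integrating the kernel `x ↦ max δ_b (μ₂ + g x)` against `μ₁` gives a `(μ₁, μ₂)`-admissible
measure whenever `g ≤ 0` and `μ₁ g = 0`. For `g = 0` this is `μ₁ ⊗ μ₂`; for `g = -K u`, with `u` a
Urysohn function separating `x₀` from another support point of `μ₁`, a product test function
built from a second support point of `μ₂` tells the two couplings apart. Finally, for admissible
`ξ ≠ ξ'` the measures `max ξ (ξ' + t)`, `t` in a nontrivial interval, are admissible and distinct.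
-/

namespace IsIPM

variable {X : Type*} [TopologicalSpace X] {μ ν : C(X, ℝ) → ℝ}

theorem map_const (h : IsIPM μ) (c : ℝ) : μ (ContinuousMap.const X c) = c := h.1 c

theorem map_const_add (h : IsIPM μ) (c : ℝ) (φ : C(X, ℝ)) :
    μ (ContinuousMap.const X c + φ) = c + μ φ := h.2.1 c φ

theorem map_sup (h : IsIPM μ) (φ ψ : C(X, ℝ)) : μ (φ ⊔ ψ) = max (μ φ) (μ ψ) := h.2.2 φ ψ

theorem map_sub_const (h : IsIPM μ) (φ : C(X, ℝ)) (c : ℝ) :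
    μ (φ - ContinuousMap.const X c) = μ φ - c := by
  have : φ - ContinuousMap.const X c = ContinuousMap.const X (-c) + φ := by
    ext x; simp [sub_eq_neg_add]
  rw [this, h.map_const_add]
  ring

theorem monotone (h : IsIPM μ) : Monotone μ := fun φ ψ hle => by
  simpa [sup_eq_right.mpr hle, h.map_sup] using h.map_sup φ ψ

theorem le_of_forall_le (h : IsIPM μ) {φ : C(X, ℝ)} {c : ℝ} (hle : ∀ x, φ x ≤ c) : μ φ ≤ c :=
  h.map_const c ▸ h.monotone fun x => hle x

theorem le_of_forall_ge (h : IsIPM μ) {φ : C(X, ℝ)} {c : ℝ} (hle : ∀ x, c ≤ φ x) : c ≤ μ φ :=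
  h.map_const c ▸ h.monotone fun x => hle x

theorem add_apply_le_of_le_idemDensity (h : IsIPM μ) {x : X} {c : ℝ}
    (hc : (c : EReal) ≤ idemDensity μ x) (φ : C(X, ℝ)) : c + φ x ≤ μ φ := by
  set ψ : C(X, ℝ) := (φ - ContinuousMap.const X (φ x)) ⊓ 0
  have hcψ : c ≤ μ ψ := by
    have : idemDensity μ x ≤ μ ψ := sInf_le ⟨ψ, inf_le_right, by simp [ψ], rfl⟩
    exact_mod_cast hc.trans this
  have hψφ : μ ψ ≤ μ φ - φ x := h.map_sub_const φ (φ x) ▸ h.monotone inf_le_left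
  linarith

theorem exists_add_apply_le_of_mem_idemSupp (h : IsIPM μ) {x : X} (hx : x ∈ idemSupp μ) :
    ∃ c : ℝ, ∀ φ : C(X, ℝ), c + φ x ≤ μ φ := by
  obtain ⟨c, -, hc⟩ := EReal.lt_iff_exists_real_btwn.mp hx
  exact ⟨c, h.add_apply_le_of_le_idemDensity hc.le⟩

theorem map_finset_sup' (h : IsIPM μ) {ι : Type*} {s : Finset ι} (hs : s.Nonempty)
    (f : ι → C(X, ℝ)) : μ (s.sup' hs f) = s.sup' hs (μ ∘ f) :=
  Finset.apply_sup'_eq_sup'_comp hs μ h.map_sup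

theorem exists_forall_apply_le [CompactSpace X] [Nonempty X] (h : IsIPM μ) :
    ∃ x, ∀ φ : C(X, ℝ), φ x ≤ μ φ := by
  by_contra! hcon
  choose φ hφ using hcon
  set χ : X → C(X, ℝ) := fun x => φ x - ContinuousMap.const X (μ (φ x))
  obtain ⟨s, hs⟩ := isCompact_univ.elim_finite_subcover (fun x => χ x ⁻¹' Set.Ioi 0)
    (fun x => (χ x).continuous.isOpen_preimage _ isOpen_Ioi)
    (fun y _ => Set.mem_iUnion.mpr ⟨y, by simpa [χ] using hφ y⟩)
  have hcover : ∀ y, ∃ x ∈ s, 0 < χ x y := fun y => by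
    simpa using hs (Set.mem_univ y)
  have hne : s.Nonempty := let ⟨x, hx, _⟩ := hcover (Classical.arbitrary X); ⟨x, hx⟩
  set ψ := s.sup' hne χ
  have hμψ : μ ψ = 0 := by
    simp [ψ, h.map_finset_sup', χ, h.map_sub_const]
  obtain ⟨m, -, hm⟩ := isCompact_univ.exists_isMinOn Set.univ_nonempty ψ.continuous.continuousOn
  have hψm : 0 < ψ m := by
    obtain ⟨x, hx, hxm⟩ := hcover m
    exact hxm.trans_le (Finset.le_sup' χ hx m)
  have : ψ m ≤ μ ψ := h.le_of_forall_ge fun y => hm (Set.mem_univ y)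
  linarith

theorem lipschitzWith_one [CompactSpace X] (h : IsIPM μ) : LipschitzWith 1 μ := by
  refine LipschitzWith.of_le_add fun φ ψ => ?_
  calc μ φ ≤ μ (ContinuousMap.const X (dist φ ψ) + ψ) := h.monotone fun x => by
        have := ContinuousMap.dist_apply_le_dist (f := φ) (g := ψ) x
        rw [Real.dist_eq] at this
        change φ x ≤ dist φ ψ + ψ x
        linarith [le_abs_self (φ x - ψ x)]
    _ = μ ψ + dist φ ψ := by rw [h.map_const_add, add_comm]

theorem max_add (hμ : IsIPM μ) (hν : IsIPM ν) {t : ℝ} (ht : t ≤ 0) :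
    IsIPM fun φ => max (μ φ) (ν φ + t) := by
  refine ⟨fun c => ?_, fun c φ => ?_, fun φ ψ => ?_⟩ <;> dsimp only
  · rw [hμ.map_const, hν.map_const]; exact max_eq_left (by linarith)
  · rw [hμ.map_const_add, hν.map_const_add, add_assoc, max_add_add_left]
  · rw [hμ.map_sup, hν.map_sup, ← max_add_add_right, max_max_max_comm]

end IsIPM

theorem isIPM_eval {X : Type*} [TopologicalSpace X] (x : X) : IsIPM fun φ : C(X, ℝ) => φ x :=
  ⟨fun _ => rfl, fun _ _ => rfl, fun _ _ => rfl⟩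

theorem IsIPM.comp_fiberwise {X Y : Type*} [TopologicalSpace X] [TopologicalSpace Y]
    {μ : C(X, ℝ) → ℝ} {ν : X → C(Y, ℝ) → ℝ} {K : C(X × Y, ℝ) → C(X, ℝ)}
    (hμ : IsIPM μ) (hν : ∀ x, IsIPM (ν x)) (hK : ∀ Φ x, K Φ x = ν x (Φ.curry x)) :
    IsIPM fun Φ => μ (K Φ) := by
  refine ⟨fun c => ?_, fun c Φ => ?_, fun Φ Ψ => ?_⟩ <;> dsimp only
  · have : K (ContinuousMap.const _ c) = ContinuousMap.const X c := by
      ext x; rw [hK]; exact (hν x).map_const c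
    rw [this, hμ.map_const]
  · have : K (ContinuousMap.const _ c + Φ) = ContinuousMap.const X c + K Φ := by
      ext x; rw [hK, ContinuousMap.add_apply, hK]; exact (hν x).map_const_add c (Φ.curry x)
    rw [this, hμ.map_const_add]
  · have : K (Φ ⊔ Ψ) = K Φ ⊔ K Ψ := by
      ext x; rw [hK, ContinuousMap.sup_apply, hK, hK]; exact (hν x).map_sup (Φ.curry x) (Ψ.curry x)
    rw [this, hμ.map_sup]

theorem isAdmissible_comp_fiberwise {X : Type*} [TopologicalSpace X]
    {μ₁ μ₂ : C(X, ℝ) → ℝ} {ν : X → C(X, ℝ) → ℝ} {K : C(X × X, ℝ) → C(X, ℝ)}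
    (h₁ : IsIPM μ₁) (hν : ∀ x, IsIPM (ν x)) (hK : ∀ Φ x, K Φ x = ν x (Φ.curry x))
    (hsnd : ∀ φ : C(X, ℝ), μ₁ (K (φ.comp ⟨Prod.snd, continuous_snd⟩)) = μ₂ φ) :
    IsAdmissible μ₁ μ₂ fun Φ => μ₁ (K Φ) := by
  refine ⟨h₁.comp_fiberwise hν hK, fun φ => ?_, hsnd⟩
  have : K (φ.comp ⟨Prod.fst, continuous_fst⟩) = φ := by
    ext x; rw [hK]; exact (hν x).map_const (φ x)
  exact congrArg μ₁ this

section PinnedCoupling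

variable {X : Type*} [TopologicalSpace X]

/-- For `g = 0` (and `δ_b ≤ μ₂`) this is the product coupling `μ₁ ⊗ μ₂`; where `g x < 0` the
fibre `max δ_b (μ₂ + g x)` is tilted towards `δ_b`. -/
def pinnedCoupling (μ₁ μ₂ : C(X, ℝ) → ℝ) (hμ₂ : Continuous μ₂) (b : X) (g : C(X, ℝ))
    (Φ : C(X × X, ℝ)) : ℝ :=
  μ₁ ⟨fun x => max (Φ (x, b)) (μ₂ (Φ.curry x) + g x),
    (Φ.continuous.comp (continuous_id.prodMk continuous_const)).max
      ((hμ₂.comp Φ.curry.continuous).add g.continuous)⟩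

variable {μ₁ μ₂ : C(X, ℝ) → ℝ} (hμ₂ : Continuous μ₂) {b : X} {g : C(X, ℝ)}

theorem isAdmissible_pinnedCoupling (h₁ : IsIPM μ₁) (h₂ : IsIPM μ₂)
    (hb : ∀ φ : C(X, ℝ), φ b ≤ μ₂ φ) (hg : g ≤ 0) (hμg : μ₁ g = 0) :
    IsAdmissible μ₁ μ₂ (pinnedCoupling μ₁ μ₂ hμ₂ b g) := by
  refine isAdmissible_comp_fiberwise h₁ (ν := fun x ψ => max (ψ b) (μ₂ ψ + g x))
    (fun x => (isIPM_eval b).max_add h₂ (hg x)) (fun _ _ => rfl) fun φ => ?_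
  change μ₁ (ContinuousMap.const X (φ b) ⊔ (ContinuousMap.const X (μ₂ φ) + g)) = μ₂ φ
  rw [h₁.map_sup, h₁.map_const, h₁.map_const_add, hμg, add_zero, max_eq_right (hb φ)]

theorem pinnedCoupling_comp_fst_add_comp_snd (h₂ : IsIPM μ₂) (φ ψ : C(X, ℝ)) :
    pinnedCoupling μ₁ μ₂ hμ₂ b g
        (φ.comp ⟨Prod.fst, continuous_fst⟩ + ψ.comp ⟨Prod.snd, continuous_snd⟩) =
      μ₁ (φ + (ContinuousMap.const X (ψ b) ⊔ (ContinuousMap.const X (μ₂ ψ) + g))) := by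
  refine congrArg μ₁ (ContinuousMap.ext fun x => ?_)
  change max (φ x + ψ b) (μ₂ (ContinuousMap.const X (φ x) + ψ) + g x) =
    φ x + max (ψ b) (μ₂ ψ + g x)
  rw [h₂.map_const_add, add_assoc, max_add_add_left]

end PinnedCoupling

section Coupling

variable {X : Type*} [TopologicalSpace X] {μ₁ μ₂ : C(X, ℝ) → ℝ}

theorem exists_isAdmissible_lt [CompactSpace X] [T2Space X] (h₁ : IsIPM μ₁) (h₂ : IsIPM μ₂)
    (hs₁ : (idemSupp μ₁).Nontrivial) (hs₂ : (idemSupp μ₂).Nontrivial) :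
    ∃ (ξ ξ' : C(X × X, ℝ) → ℝ) (Φ : C(X × X, ℝ)),
      IsAdmissible μ₁ μ₂ ξ ∧ IsAdmissible μ₁ μ₂ ξ' ∧ ξ' Φ < ξ Φ := by
  have : Nonempty X := hs₁.nonempty.to_subtype.map Subtype.val
  obtain ⟨x₀, hx₀⟩ := h₁.exists_forall_apply_le
  obtain ⟨a, ha, hax₀⟩ := hs₁.exists_ne x₀
  obtain ⟨c₁, hc₁⟩ := h₁.exists_add_apply_le_of_mem_idemSupp ha
  obtain ⟨b, hb⟩ := h₂.exists_forall_apply_le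
  obtain ⟨b', hb', hb'b⟩ := hs₂.exists_ne b
  obtain ⟨c₂, hc₂⟩ := h₂.exists_add_apply_le_of_mem_idemSupp hb'
  obtain ⟨u, hu₀, hu₁, hu⟩ := exists_continuous_zero_one_of_isClosed isClosed_singleton
    isClosed_singleton (Set.disjoint_singleton.mpr hax₀.symm)
  obtain ⟨v, hv₀, hv₁, hv⟩ := exists_continuous_zero_one_of_isClosed isClosed_singleton
    isClosed_singleton (Set.disjoint_singleton.mpr hb'b)
  set K := 1 + |c₁| + |c₂|
  have hK : 0 ≤ K := by positivity
  set g := (-K) • u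
  have hg : g ≤ 0 := fun x => by simpa [g] using mul_nonneg hK (hu x).1
  have hμg : μ₁ g = 0 :=
    le_antisymm (h₁.le_of_forall_le hg) (by simpa [g, hu₀ rfl] using hx₀ g)
  have hμ₂ := h₂.lipschitzWith_one.continuous
  set φ := K • u - ContinuousMap.const X K
  set ψ := (-K) • v
  refine ⟨pinnedCoupling μ₁ μ₂ hμ₂ b 0, pinnedCoupling μ₁ μ₂ hμ₂ b g,
    φ.comp ⟨Prod.fst, continuous_fst⟩ + ψ.comp ⟨Prod.snd, continuous_snd⟩,
    isAdmissible_pinnedCoupling hμ₂ h₁ h₂ hb le_rfl (h₁.map_const 0),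
    isAdmissible_pinnedCoupling hμ₂ h₁ h₂ hb hg hμg, ?_⟩
  have hμψ : μ₂ ψ ≤ 0 := h₂.le_of_forall_le fun y => by simpa [ψ] using mul_nonneg hK (hv y).1
  rw [pinnedCoupling_comp_fst_add_comp_snd hμ₂ h₂, pinnedCoupling_comp_fst_add_comp_snd hμ₂ h₂]
  calc μ₁ (φ + (ContinuousMap.const X (ψ b) ⊔ (ContinuousMap.const X (μ₂ ψ) + g)))
      ≤ -K := h₁.le_of_forall_le fun x => by
        have hφx : φ x = K * u x - K := by simp [φ]
        have hfibre : max (ψ b) (μ₂ ψ + g x) ≤ -(K * u x) := by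
          refine max_le ?_ (by simpa [g] using hμψ)
          simpa [ψ, hv₁ rfl] using mul_le_of_le_one_right hK (hu x).2
        change φ x + max (ψ b) (μ₂ ψ + g x) ≤ -K
        linarith
    _ < c₁ + c₂ := by linarith [neg_abs_le c₁, neg_abs_le c₂]
    _ ≤ μ₁ φ + μ₂ ψ := by
        have hφa : φ a = 0 := by simp [φ, hu₁ rfl]
        have hψb' : ψ b' = 0 := by simp [ψ, hv₀ rfl]
        linarith [hc₁ φ, hc₂ ψ]
    _ = μ₁ (ContinuousMap.const X (μ₂ ψ) + φ) := by rw [h₁.map_const_add, add_comm]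
    _ ≤ μ₁ (φ + (ContinuousMap.const X (ψ b) ⊔ (ContinuousMap.const X (μ₂ ψ) + 0))) :=
        h₁.monotone fun x => by
          change μ₂ ψ + φ x ≤ φ x + max (ψ b) (μ₂ ψ + 0)
          linarith [le_max_right (ψ b) (μ₂ ψ + 0)]

theorem IsAdmissible.max_add {ξ ξ' : C(X × X, ℝ) → ℝ} (h : IsAdmissible μ₁ μ₂ ξ)
    (h' : IsAdmissible μ₁ μ₂ ξ') {t : ℝ} (ht : t ≤ 0) :
    IsAdmissible μ₁ μ₂ fun Φ => max (ξ Φ) (ξ' Φ + t) := by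
  refine ⟨h.1.max_add h'.1 ht, fun φ => ?_, fun φ => ?_⟩ <;> dsimp only
  · rw [h.2.1, h'.2.1]; exact max_eq_left (by linarith)
  · rw [h.2.2, h'.2.2]; exact max_eq_left (by linarith)

theorem continuum_le_mk_isAdmissible {ξ ξ' : C(X × X, ℝ) → ℝ} {Φ : C(X × X, ℝ)}
    (h : IsAdmissible μ₁ μ₂ ξ) (h' : IsAdmissible μ₁ μ₂ ξ') (hlt : ξ Φ < ξ' Φ) :
    Cardinal.continuum ≤ Cardinal.mk {ξ : C(X × X, ℝ) → ℝ // IsAdmissible μ₁ μ₂ ξ} := by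
  let F : Set.Icc (ξ Φ - ξ' Φ) 0 → {ξ : C(X × X, ℝ) → ℝ // IsAdmissible μ₁ μ₂ ξ} :=
    fun t => ⟨_, h.max_add h' t.2.2⟩
  have hF : ∀ t, (F t).1 Φ = ξ' Φ + t := fun t => max_eq_right (by linarith [t.2.1])
  have hinj : Function.Injective F := fun t t' htt' =>
    Subtype.ext (by simpa [hF] using congrArg (fun ζ => ζ.1 Φ) htt')
  simpa [Cardinal.mk_Icc_real (sub_neg.mpr hlt)] using Cardinal.lift_mk_le'.mpr ⟨⟨F, hinj⟩⟩

end Coupling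

theorem stmt17 {X : Type*} [TopologicalSpace X] [CompactSpace X] [T2Space X]
    (μ₁ μ₂ : C(X, ℝ) → ℝ) (h₁ : IsIPM μ₁) (h₂ : IsIPM μ₂)
    (hs₁ : (idemSupp μ₁).Nontrivial) (hs₂ : (idemSupp μ₂).Nontrivial) :
    Cardinal.continuum ≤ Cardinal.mk {ξ : C(X × X, ℝ) → ℝ // IsAdmissible μ₁ μ₂ ξ} := by
  obtain ⟨ξ, ξ', Φ, h, h', hlt⟩ := exists_isAdmissible_lt h₁ h₂ hs₁ hs₂
  exact continuum_le_mk_isAdmissible h' h hlt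
end
end
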